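/- arXiv:2206.09578 — 4 statements merged into one kernel-verified Lean document; each statement's English description precedes it below -/
import Mathlib

section
/- Let F : ℝ^d → ℝ be differentiable, L-smooth and satisfy the μ-PL condition with global minimizer w*. Fix a point w ∈ ℝ^d and a step size α with 0 < α ≤ 1/L and α ≤ 1/μ. Let g and ε be square-integrable random vectors in ℝ^d on a probability space with E[g] = ∇F(w) and E[⟨g, ε⟩] = ⟨∇F(w), E[ε]⟩, and set w⁺ = w − α(g + ε). Then E[F(w⁺)] − F(w*) ≤ (1 − μα)(F(w) − F(w*)) + (α(1 − Lα)/2)‖E[ε]‖² + (Lα²/2)E[‖ε‖²] + (Lα²/2)E[‖g‖²]. -/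
/-!
Apply the descent lemma `F(w - v) ≤ F(w) - ⟪∇F(w), v⟫ + L/2 ‖v‖²` pointwise to
`v = α(g + ε)` and take expectations: `E[g] = ∇F(w)` and the cross-term hypothesis turn the
right-hand side into `F(w) - α‖∇F(w)‖² - α(1 - Lα)⟪∇F(w), E[ε]⟫ + Lα²/2 (E‖g‖² + E‖ε‖²)`.
The PL inequality trades half of `α‖∇F(w)‖²` for `μα(F(w) - F(w*))`, and what remains of the gap is
`α(1 - Lα)/2 ‖∇F(w) + E[ε]‖² + Lα²/2 ‖∇F(w)‖² ≥ 0`.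
-/

open MeasureTheory
open scoped RealInnerProductSpace

theorem MeasureTheory.MemLp.integrable_inner {Ω E : Type*} [MeasurableSpace Ω] {P : Measure Ω}
    [NormedAddCommGroup E] [InnerProductSpace ℝ E] {f g : Ω → E}
    (hf : MemLp f 2 P) (hg : MemLp g 2 P) : Integrable (fun ω => ⟪f ω, g ω⟫) P :=
  (L2.integrable_inner (𝕜 := ℝ) (hf.toLp f) (hg.toLp g)).congr <| by
    filter_upwards [hf.coeFn_toLp, hg.coeFn_toLp] with ω hfω hgω
    rw [hfω, hgω]

theorem MeasureTheory.integral_norm_add_sq {Ω E : Type*} [MeasurableSpace Ω] {P : Measure Ω}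
    [NormedAddCommGroup E] [InnerProductSpace ℝ E] {f g : Ω → E}
    (hf : MemLp f 2 P) (hg : MemLp g 2 P) :
    ∫ ω, ‖f ω + g ω‖ ^ 2 ∂P =
      ∫ ω, ‖f ω‖ ^ 2 ∂P + 2 * ∫ ω, ⟪f ω, g ω⟫ ∂P + ∫ ω, ‖g ω‖ ^ 2 ∂P := by
  have hf2 := (memLp_two_iff_integrable_sq_norm hf.1).mp hf
  have hg2 := (memLp_two_iff_integrable_sq_norm hg.1).mp hg
  have hfg : Integrable (fun ω => 2 * ⟪f ω, g ω⟫) P := (hf.integrable_inner hg).const_mul 2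
  have hsum : Integrable (fun ω => ‖f ω‖ ^ 2 + 2 * ⟪f ω, g ω⟫) P := hf2.add hfg
  simp_rw [norm_add_sq_real]
  rw [integral_add hsum hg2, integral_add hf2 hfg, integral_const_mul]

section Descent

variable {E : Type*} [NormedAddCommGroup E] [InnerProductSpace ℝ E] [CompleteSpace E]
  {F : E → ℝ} {L : ℝ}

theorem le_add_inner_gradient_add_sq (hF : Differentiable ℝ F)
    (hL : ∀ x y, ‖gradient F x - gradient F y‖ ≤ L * ‖x - y‖) (x y : E) :
    F y ≤ F x + ⟪gradient F x, y - x⟫ + L / 2 * ‖y - x‖ ^ 2 := by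
  set v := y - x
  -- `φ` is antitone on `[0, ∞)`, and `φ 1 ≤ φ 0` is the claim.
  set φ : ℝ → ℝ := fun t => F (x + t • v) - t * ⟪gradient F x, v⟫ - L / 2 * t ^ 2 * ‖v‖ ^ 2
  have hφ : ∀ t, HasDerivAt φ
      (⟪gradient F (x + t • v), v⟫ - ⟪gradient F x, v⟫ - L * t * ‖v‖ ^ 2) t := by
    intro t
    have hpath : HasDerivAt (fun s : ℝ => x + s • v) v t := by
      simpa using ((hasDerivAt_id t).smul_const v).const_add x
    have hFpath := (hF (x + t • v)).hasGradientAt.hasFDerivAt.comp_hasDerivAt t hpath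
    refine ((hFpath.sub ((hasDerivAt_id t).mul_const ⟪gradient F x, v⟫)).sub
      (((hasDerivAt_pow 2 t).const_mul (L / 2)).mul_const (‖v‖ ^ 2))).congr_deriv ?_
    simp only [InnerProductSpace.toDual_apply_apply]
    ring
  have hφ' : ∀ t ∈ interior (Set.Ici (0 : ℝ)),
      ⟪gradient F (x + t • v), v⟫ - ⟪gradient F x, v⟫ - L * t * ‖v‖ ^ 2 ≤ 0 := by
    intro t ht
    rw [interior_Ici] at ht
    have hlip : ‖gradient F (x + t • v) - gradient F x‖ ≤ L * (t * ‖v‖) := by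
      simpa [norm_smul, abs_of_pos (Set.mem_Ioi.mp ht)] using hL (x + t • v) x
    have hcs := real_inner_le_norm (gradient F (x + t • v) - gradient F x) v
    rw [inner_sub_left] at hcs
    nlinarith [mul_le_mul_of_nonneg_right hlip (norm_nonneg v)]
  have hanti := antitoneOn_of_hasDerivWithinAt_nonpos (convex_Ici 0)
    (fun t _ => (hφ t).continuousAt.continuousWithinAt)
    (fun t _ => (hφ t).hasDerivWithinAt) hφ'
  have hφ10 := hanti Set.self_mem_Ici (show (0 : ℝ) ≤ 1 from zero_le_one) zero_le_one
  simp only [φ, v, one_smul, zero_smul, add_zero, add_sub_cancel] at hφ10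
  linarith

theorem integral_comp_sub_le_sub_inner_add_sq {Ω : Type*} [MeasurableSpace Ω] {P : Measure Ω}
    [IsProbabilityMeasure P] (hF : Differentiable ℝ F)
    (hL : ∀ x y, ‖gradient F x - gradient F y‖ ≤ L * ‖x - y‖) (hbdd : BddBelow (Set.range F))
    (x : E) {v : Ω → E} (hv : MemLp v 2 P) :
    ∫ ω, F (x - v ω) ∂P ≤ F x - ⟪gradient F x, ∫ ω, v ω ∂P⟫ + L / 2 * ∫ ω, ‖v ω‖ ^ 2 ∂P := by
  obtain ⟨m, hm⟩ := hbdd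
  have hstep : ∀ ω, F (x - v ω) ≤ F x - ⟪gradient F x, v ω⟫ + L / 2 * ‖v ω‖ ^ 2 := fun ω => by
    simpa [sub_eq_add_neg] using le_add_inner_gradient_add_sq hF hL x (x - v ω)
  have hv1 : Integrable v P := hv.integrable one_le_two
  have hlin : Integrable (fun ω => F x - ⟪gradient F x, v ω⟫) P :=
    (integrable_const _).sub (hv1.const_inner _)
  have hquad : Integrable (fun ω => L / 2 * ‖v ω‖ ^ 2) P :=
    ((memLp_two_iff_integrable_sq_norm hv.1).mp hv).const_mul _
  have hmodel : Integrable (fun ω => F x - ⟪gradient F x, v ω⟫ + L / 2 * ‖v ω‖ ^ 2) P :=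
    hlin.add hquad
  have hFv : Integrable (fun ω => F (x - v ω)) P :=
    integrable_of_le_of_le (g₁ := fun _ => m)
      (hF.continuous.comp_aestronglyMeasurable (aestronglyMeasurable_const.sub hv.1))
      (ae_of_all _ fun ω => hm ⟨_, rfl⟩) (ae_of_all _ hstep) (integrable_const m) hmodel
  calc ∫ ω, F (x - v ω) ∂P
      ≤ ∫ ω, F x - ⟪gradient F x, v ω⟫ + L / 2 * ‖v ω‖ ^ 2 ∂P :=
        integral_mono hFv hmodel hstep
    _ = _ := by
      rw [integral_add hlin hquad, integral_sub (integrable_const _) (hv1.const_inner _),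
        integral_const, integral_inner hv1, integral_const_mul]
      simp

end Descent

theorem stmt0_general {d : ℕ} {Ω : Type*} [MeasurableSpace Ω] (P : Measure Ω)
    [IsProbabilityMeasure P]
    (F : EuclideanSpace ℝ (Fin d) → ℝ) (L μ α : ℝ)
    (hL : 0 < L)
    (hdiff : Differentiable ℝ F)
    (hsmooth : ∀ w w' : EuclideanSpace ℝ (Fin d),
      ‖gradient F w - gradient F w'‖ ≤ L * ‖w - w'‖)
    (wstar : EuclideanSpace ℝ (Fin d))
    (hmin : ∀ v : EuclideanSpace ℝ (Fin d), F wstar ≤ F v)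
    (hPL : ∀ w : EuclideanSpace ℝ (Fin d),
      ‖gradient F w‖ ^ 2 ≥ 2 * μ * (F w - F wstar))
    (w : EuclideanSpace ℝ (Fin d))
    (hα0 : 0 < α) (hαL : α ≤ 1 / L)
    (g ε : Ω → EuclideanSpace ℝ (Fin d))
    (hg2 : MemLp g 2 P) (hε2 : MemLp ε 2 P)
    (hgmean : ∫ ω, g ω ∂P = gradient F w)
    (hcross : ∫ ω, ⟪g ω, ε ω⟫ ∂P = ⟪gradient F w, ∫ ω, ε ω ∂P⟫)
    (wplus : Ω → EuclideanSpace ℝ (Fin d))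
    (hwplus : ∀ ω, wplus ω = w - α • (g ω + ε ω)) :
    (∫ ω, F (wplus ω) ∂P) - F wstar ≤
      (1 - μ * α) * (F w - F wstar)
        + (α * (1 - L * α) / 2) * ‖∫ ω, ε ω ∂P‖ ^ 2
        + (L * α ^ 2 / 2) * ∫ ω, ‖ε ω‖ ^ 2 ∂P
        + (L * α ^ 2 / 2) * ∫ ω, ‖g ω‖ ^ 2 ∂P := by
  simp only [hwplus]
  have hstep := integral_comp_sub_le_sub_inner_add_sq hdiff hsmooth
    ⟨F wstar, Set.forall_mem_range.2 hmin⟩ w (v := fun ω => α • (g ω + ε ω))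
    ((hg2.add hε2).const_smul α)
  set G := gradient F w
  set e := ∫ ω, ε ω ∂P
  have hmean : ∫ ω, α • (g ω + ε ω) ∂P = α • (G + e) := by
    rw [integral_smul, integral_add (hg2.integrable one_le_two) (hε2.integrable one_le_two),
      hgmean]
  have hsecond : ∫ ω, ‖α • (g ω + ε ω)‖ ^ 2 ∂P =
      α ^ 2 * (∫ ω, ‖g ω‖ ^ 2 ∂P + 2 * ⟪G, e⟫ + ∫ ω, ‖ε ω‖ ^ 2 ∂P) := by
    simp_rw [norm_smul, mul_pow, Real.norm_eq_abs, sq_abs]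
    rw [integral_const_mul, integral_norm_add_sq hg2 hε2, hcross]
  rw [hmean, hsecond, inner_smul_right, inner_add_right, real_inner_self_eq_norm_sq] at hstep
  have hLα : L * α ≤ 1 := by rwa [le_div_iff₀ hL, mul_comm] at hαL
  have hPLw : 2 * μ * (F w - F wstar) ≤ ‖G‖ ^ 2 := hPL w
  have hGe : 0 ≤ ‖G‖ ^ 2 + 2 * ⟪G, e⟫ + ‖e‖ ^ 2 := norm_add_sq_real G e ▸ sq_nonneg _
  linarith [mul_le_mul_of_nonneg_left hPLw hα0.le,
    mul_nonneg (mul_nonneg hα0.le (sub_nonneg.2 hLα)) hGe,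
    mul_nonneg (mul_nonneg hL.le (sq_nonneg α)) (sq_nonneg ‖G‖)]

/-- One-step descent lemma (eq. (62) of the paper) for gradient descent with a
stochastic gradient `g` perturbed by an additive aggregation error `ε`, for an
`L`-smooth function `F` satisfying the `μ`-PL condition with global minimizer
`w*`. -/
theorem stmt0 {d : ℕ} {Ω : Type*} [MeasurableSpace Ω] (P : Measure Ω)
    [IsProbabilityMeasure P]
    (F : EuclideanSpace ℝ (Fin d) → ℝ) (L μ α : ℝ)
    (hL : 0 < L) (hμ : 0 < μ)
    (hdiff : Differentiable ℝ F)
    (hsmooth : ∀ w w' : EuclideanSpace ℝ (Fin d),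
      ‖gradient F w - gradient F w'‖ ≤ L * ‖w - w'‖)
    (wstar : EuclideanSpace ℝ (Fin d))
    (hmin : ∀ v : EuclideanSpace ℝ (Fin d), F wstar ≤ F v)
    (hPL : ∀ w : EuclideanSpace ℝ (Fin d),
      ‖gradient F w‖ ^ 2 ≥ 2 * μ * (F w - F wstar))
    (w : EuclideanSpace ℝ (Fin d))
    (hα0 : 0 < α) (hαL : α ≤ 1 / L) (hαμ : α ≤ 1 / μ)
    (g ε : Ω → EuclideanSpace ℝ (Fin d))
    (hg2 : MemLp g 2 P) (hε2 : MemLp ε 2 P)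
    (hgmean : ∫ ω, g ω ∂P = gradient F w)
    (hcross : ∫ ω, ⟪g ω, ε ω⟫ ∂P = ⟪gradient F w, ∫ ω, ε ω ∂P⟫)
    (wplus : Ω → EuclideanSpace ℝ (Fin d))
    (hwplus : ∀ ω, wplus ω = w - α • (g ω + ε ω)) :
    (∫ ω, F (wplus ω) ∂P) - F wstar ≤
      (1 - μ * α) * (F w - F wstar)
        + (α * (1 - L * α) / 2) * ‖∫ ω, ε ω ∂P‖ ^ 2
        + (L * α ^ 2 / 2) * ∫ ω, ‖ε ω‖ ^ 2 ∂P
        + (L * α ^ 2 / 2) * ∫ ω, ‖g ω‖ ^ 2 ∂P :=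
  stmt0_general P F L μ α hL hdiff hsmooth wstar hmin hPL w hα0 hαL g ε hg2 hε2 hgmean hcross wplus
    hwplus
end

section
/- Consider K virtual energy-deficit queues over one period of ρ rounds starting at round t₀: for each device k ∈ {1,…,K}, e_k(t₀) ≥ 0 is given and e_k(t+1) = max{ e_k(t) + x_k(t), 0 } for t₀ ≤ t ≤ t₀+ρ−1, where x_k(t) = p_k^†(t) − P̄_k with p_k^†(t) ≥ 0 the online power consumption and P̄_k > 0 the per-round average power budget. Suppose: (i) |p_k(t) − P̄_k| ≤ E_max for all k, t and for both the online powers p_k^†(t) and the offline powers p_k^*(t) ≥ 0; (ii) per-round drift-plus-penalty minimization: for every round t in the period, V·G_t^† + Σ_k e_k(t)·p_k^†(t) ≤ V·G_t^* + Σ_k e_k(t)·p_k^*(t), where V > 0 and G_t^†, G_t^* ≥ 0 are the per-round (weighted) optimality-gap contributions of the online and offline policies. Then Σ_{t=t₀}^{t₀+ρ−1} G_t^† ≤ Σ_{t=t₀}^{t₀+ρ−1} G_t^* + C/V, where C = ρ·C_e + (1/2)Σ_k e_k(t₀)² + E_max · Σ_{t=t₀}^{t₀+ρ−1} Σ_k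 ( e_k(t₀) + (t − t₀)·E_max ) and C_e = (1/2)K·E_max². -/
/-!
The Lyapunov function `L(t) = ½ ∑ₖ eₖ(t)²` of the deficit queues drifts by at most
`C_e + ∑ₖ eₖ(t) (p†ₖ(t) - P̄ₖ)` per round. Adding `V G†_t` and using the drift-plus-penalty
inequality trades the online powers for the offline ones, and `eₖ(t) (p*ₖ(t) - P̄ₖ)` is at most
`(eₖ(t₀) + (t - t₀) E_max) E_max`, because a queue grows by at most `E_max` per round.
Summing over the period, the drift telescopes to `L(t₀ + ρ) - L(t₀) ≥ -L(t₀)`; dividing by `V`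
gives the bound.
-/

open Finset

lemma sq_max_add_zero_le (q x : ℝ) : max (q + x) 0 ^ 2 ≤ q ^ 2 + 2 * q * x + x ^ 2 := by
  rcases max_cases (q + x) 0 with ⟨h, _⟩ | ⟨h, _⟩ <;> rw [h]
  · exact le_of_eq (by ring)
  · nlinarith [sq_nonneg (q + x)]

lemma queue_bounds {q x : ℕ → ℝ} {E : ℝ} {t₀ ρ : ℕ} (h0 : 0 ≤ q t₀)
    (hq : ∀ t ∈ Ico t₀ (t₀ + ρ), q (t + 1) = max (q t + x t) 0) (hx : ∀ t, |x t| ≤ E)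
    {n : ℕ} (hn : n ≤ ρ) : 0 ≤ q (t₀ + n) ∧ q (t₀ + n) ≤ q t₀ + n * E := by
  induction n with
  | zero => simpa using h0
  | succ n ih =>
    obtain ⟨hpos, hle⟩ := ih (by omega)
    have hxE := (abs_le.mp (hx (t₀ + n))).2
    have hE : 0 ≤ E := (abs_nonneg _).trans (hx 0)
    rw [← add_assoc, hq (t₀ + n) (mem_Ico.mpr ⟨by omega, by omega⟩)]
    refine ⟨le_max_right _ _, max_le ?_ ?_⟩
    · push_cast
      linarith
    · positivity

lemma queue_bounds_of_mem_Icc {q x : ℕ → ℝ} {E : ℝ} {t₀ ρ t : ℕ} (h0 : 0 ≤ q t₀)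
    (hq : ∀ t ∈ Ico t₀ (t₀ + ρ), q (t + 1) = max (q t + x t) 0) (hx : ∀ t, |x t| ≤ E)
    (ht : t ∈ Icc t₀ (t₀ + ρ)) : 0 ≤ q t ∧ q t ≤ q t₀ + ((t - t₀ : ℕ) : ℝ) * E := by
  obtain ⟨ht₀, htρ⟩ := mem_Icc.mp ht
  obtain ⟨n, rfl⟩ := Nat.exists_eq_add_of_le ht₀
  rw [Nat.add_sub_cancel_left]
  exact queue_bounds h0 hq hx (by omega)

section Lyapunov

variable {ι : Type*} [Fintype ι]

noncomputable def lyapunov (e : ι → ℝ) : ℝ :=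
  (1 / 2) * ∑ k, e k ^ 2

lemma lyapunov_nonneg (e : ι → ℝ) : 0 ≤ lyapunov e := by
  unfold lyapunov
  positivity

lemma lyapunov_drift_le {e e' x : ι → ℝ} {E : ℝ}
    (he' : ∀ k, e' k = max (e k + x k) 0) (hx : ∀ k, |x k| ≤ E) :
    lyapunov e' - lyapunov e ≤ (1 / 2) * Fintype.card ι * E ^ 2 + ∑ k, e k * x k := by
  have hk : ∀ k, e' k ^ 2 ≤ e k ^ 2 + 2 * (e k * x k) + E ^ 2 := fun k => by
    obtain ⟨hlo, hhi⟩ := abs_le.mp (hx k)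
    have := sq_le_sq' hlo hhi
    rw [he']
    nlinarith [sq_max_add_zero_le (e k) (x k)]
  have hsum := sum_le_sum fun k (_ : k ∈ univ) => hk k
  simp only [sum_add_distrib, ← mul_sum, sum_const, card_univ, nsmul_eq_mul] at hsum
  unfold lyapunov
  linarith

lemma drift_plus_penalty_le {e e' pdag pstar Pbar B : ι → ℝ}
    {V Gdag Gstar E : ℝ} (he' : ∀ k, e' k = max (e k + (pdag k - Pbar k)) 0)
    (hdag : ∀ k, |pdag k - Pbar k| ≤ E) (hstar : ∀ k, |pstar k - Pbar k| ≤ E)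
    (he : ∀ k, 0 ≤ e k ∧ e k ≤ B k)
    (hdpp : V * Gdag + ∑ k, e k * pdag k ≤ V * Gstar + ∑ k, e k * pstar k) :
    V * Gdag + (lyapunov e' - lyapunov e)
      ≤ V * Gstar + (1 / 2) * Fintype.card ι * E ^ 2 + E * ∑ k, B k := by
  have hdrift := lyapunov_drift_le he' hdag
  have hoffline : ∑ k, e k * (pstar k - Pbar k) ≤ E * ∑ k, B k := by
    rw [mul_sum]
    refine sum_le_sum fun k _ => ?_
    calc e k * (pstar k - Pbar k) = (pstar k - Pbar k) * e k := mul_comm _ _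
      _ ≤ E * B k := mul_le_mul (abs_le.mp (hstar k)).2 (he k).2 (he k).1
          ((abs_nonneg _).trans (hstar k))
  simp only [mul_sub, sum_sub_distrib] at hdrift hoffline
  linarith

end Lyapunov

lemma sum_le_sum_add_of_drift_le {f g L : ℕ → ℝ} {t₀ ρ : ℕ} (hL : 0 ≤ L (t₀ + ρ))
    (h : ∀ t ∈ Ico t₀ (t₀ + ρ), f t + (L (t + 1) - L t) ≤ g t) :
    ∑ t ∈ Ico t₀ (t₀ + ρ), f t ≤ ∑ t ∈ Ico t₀ (t₀ + ρ), g t + L t₀ := by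
  have hsum := sum_le_sum h
  rw [sum_add_distrib, sum_Ico_sub L (Nat.le_add_right t₀ ρ)] at hsum
  linarith

theorem stmt5_general (K ρ t₀ : ℕ)
    (Emax V : ℝ) (hV : 0 < V)
    (e : Fin K → ℕ → ℝ) (pdag pstar : Fin K → ℕ → ℝ) (Pbar : Fin K → ℝ)
    (Gdag Gstar : ℕ → ℝ)
    (he0 : ∀ k, 0 ≤ e k t₀)
    (hqueue : ∀ (k : Fin K), ∀ t ∈ Finset.Ico t₀ (t₀ + ρ),
      e k (t + 1) = max (e k t + (pdag k t - Pbar k)) 0)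
    (hbdd : ∀ (k : Fin K) (t : ℕ),
      |pdag k t - Pbar k| ≤ Emax ∧ |pstar k t - Pbar k| ≤ Emax)
    (hdpp : ∀ t ∈ Finset.Ico t₀ (t₀ + ρ),
      V * Gdag t + ∑ k, e k t * pdag k t ≤ V * Gstar t + ∑ k, e k t * pstar k t)
    (Ce C : ℝ)
    (hCe : Ce = (1 / 2) * K * Emax ^ 2)
    (hC : C = ρ * Ce + (1 / 2) * ∑ k, (e k t₀) ^ 2
        + Emax * ∑ t ∈ Finset.Ico t₀ (t₀ + ρ), ∑ k, (e k t₀ + ((t - t₀ : ℕ) : ℝ) * Emax)) :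
    ∑ t ∈ Finset.Ico t₀ (t₀ + ρ), Gdag t
      ≤ ∑ t ∈ Finset.Ico t₀ (t₀ + ρ), Gstar t + C / V := by
  have hround : ∀ t ∈ Ico t₀ (t₀ + ρ),
      V * Gdag t + (lyapunov (fun k => e k (t + 1)) - lyapunov (fun k => e k t))
        ≤ V * Gstar t + Ce + Emax * ∑ k, (e k t₀ + ((t - t₀ : ℕ) : ℝ) * Emax) := by
    intro t ht
    have hbounds k := queue_bounds_of_mem_Icc (he0 k) (hqueue k) (fun t => (hbdd k t).1)
      (Ico_subset_Icc_self ht)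
    simpa [hCe] using drift_plus_penalty_le (hqueue · t ht) (hbdd · t |>.1) (hbdd · t |>.2)
      hbounds (hdpp t ht)
  have hsum := sum_le_sum_add_of_drift_le (L := fun t => lyapunov fun k => e k t)
    (lyapunov_nonneg _) hround
  rw [sum_add_distrib, sum_add_distrib, ← mul_sum, ← mul_sum, ← mul_sum, sum_const,
    Nat.card_Ico, Nat.add_sub_cancel_left, nsmul_eq_mul] at hsum
  rw [← sub_le_iff_le_add', le_div_iff₀ hV, hC]
  unfold lyapunov at hsum
  linarith

/-- Performance part of Theorem 2 of the paper (O(1/V)-optimality, eq. (35)),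
stated for one period of `ρ` rounds starting at round `t₀`: under the virtual
energy-deficit queue dynamics, bounded power deviations, and per-round
drift-plus-penalty minimization, the online per-round optimality-gap
contributions are within `C/V` of the offline ones. -/
theorem stmt5 (K ρ t₀ : ℕ) (hK : 1 ≤ K) (hρ : 1 ≤ ρ)
    (Emax V : ℝ) (hV : 0 < V)
    (e : Fin K → ℕ → ℝ) (pdag pstar : Fin K → ℕ → ℝ) (Pbar : Fin K → ℝ)
    (Gdag Gstar : ℕ → ℝ)
    (he0 : ∀ k, 0 ≤ e k t₀)
    (hPbar : ∀ k, 0 < Pbar k)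
    (hpdag : ∀ k t, 0 ≤ pdag k t) (hpstar : ∀ k t, 0 ≤ pstar k t)
    (hGdag : ∀ t, 0 ≤ Gdag t) (hGstar : ∀ t, 0 ≤ Gstar t)
    (hqueue : ∀ (k : Fin K), ∀ t ∈ Finset.Ico t₀ (t₀ + ρ),
      e k (t + 1) = max (e k t + (pdag k t - Pbar k)) 0)
    (hbdd : ∀ (k : Fin K) (t : ℕ),
      |pdag k t - Pbar k| ≤ Emax ∧ |pstar k t - Pbar k| ≤ Emax)
    (hdpp : ∀ t ∈ Finset.Ico t₀ (t₀ + ρ),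
      V * Gdag t + ∑ k, e k t * pdag k t ≤ V * Gstar t + ∑ k, e k t * pstar k t)
    (Ce C : ℝ)
    (hCe : Ce = (1 / 2) * K * Emax ^ 2)
    (hC : C = ρ * Ce + (1 / 2) * ∑ k, (e k t₀) ^ 2
        + Emax * ∑ t ∈ Finset.Ico t₀ (t₀ + ρ), ∑ k, (e k t₀ + ((t - t₀ : ℕ) : ℝ) * Emax)) :
    ∑ t ∈ Finset.Ico t₀ (t₀ + ρ), Gdag t
      ≤ ∑ t ∈ Finset.Ico t₀ (t₀ + ρ), Gstar t + C / V :=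
  stmt5_general K ρ t₀ Emax V hV e pdag pstar Pbar Gdag Gstar he0 hqueue hbdd hdpp Ce C hCe hC
end

section
/- Under the same setup as the performance bound of Theorem 2 — K queues e_k(t+1) = max{ e_k(t) + p_k^†(t) − P̄_k, 0 } with e_k(t₀) ≥ 0 over a period of ρ rounds starting at t₀; |p_k(t) − P̄_k| ≤ E_max for both policies; and per-round drift-plus-penalty minimization V·G_t^† + Σ_k e_k(t)·p_k^†(t) ≤ V·G_t^* + Σ_k e_k(t)·p_k^*(t) for every t with V > 0 and G_t^†, G_t^* ≥ 0 — the cumulative energy overshoot of every device k is bounded as Σ_{t=t₀}^{t₀+ρ−1} ( p_k^†(t) − P̄_k ) ≤ sqrt( 2( C + V·Σ_{t=t₀}^{t₀+ρ−1} G_t^* ) ) − e_k(t₀), where C = ρ·C_e + (1/2)Σ_k e_k(t₀)² + E_max · Σ_{t=t₀}^{t₀+ρ−1} Σ_k ( e_k(t₀) + (t − t₀)·E_max ) and C_e = (1/2)K·E_max². -/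
/-!
The squared backlogs `∑ⱼ eⱼ(t)²` serve as a Lyapunov function. Since each queue grows by at most
`E_max` per round and the online policy does no worse than the offline one in the
drift-plus-penalty objective, one round raises `∑ⱼ eⱼ²` by at most
`K E_max² + 2 (V G*_t + E_max ∑ⱼ (eⱼ(t₀) + (t - t₀) E_max))`. Summed over the period this gives
`eₖ(t₀ + ρ)² ≤ 2 (C + V ∑ G*_t)`, and the queue dominates the running sum of overshoots:
`∑ (p†ₖ - P̄ₖ) ≤ eₖ(t₀ + ρ) - eₖ(t₀)`.
-/

open Finset

def IsDeficitQueue (e a : ℕ → ℝ) (t₀ ρ : ℕ) : Prop :=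
  ∀ t ∈ Ico t₀ (t₀ + ρ), e (t + 1) = max (e t + a t) 0

theorem max_add_zero_sq_le {x a E : ℝ} (ha : |a| ≤ E) :
    max (x + a) 0 ^ 2 ≤ x ^ 2 + 2 * (x * a) + E ^ 2 := by
  have hmax : max (x + a) 0 ^ 2 ≤ (x + a) ^ 2 := by
    rcases le_total 0 (x + a) with h | h
    · rw [max_eq_left h]
    · rw [max_eq_right h]; simpa using sq_nonneg (x + a)
  have ha2 : a ^ 2 ≤ E ^ 2 := (sq_abs a).symm.le.trans (pow_le_pow_left₀ (abs_nonneg a) ha 2)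
  nlinarith

theorem sum_mul_sub_le_of_drift_plus_penalty {ι : Type*} [Fintype ι] {x p q P : ι → ℝ}
    {V G G' E : ℝ} (hdpp : V * G + ∑ j, x j * p j ≤ V * G' + ∑ j, x j * q j)
    (hG : 0 ≤ V * G) (hx : ∀ j, 0 ≤ x j) (hqE : ∀ j, q j - P j ≤ E) :
    ∑ j, x j * (p j - P j) ≤ V * G' + E * ∑ j, x j := by
  have hq : ∑ j, x j * (q j - P j) ≤ E * ∑ j, x j := by
    rw [mul_sum]
    exact sum_le_sum fun j _ => by nlinarith [hx j, hqE j]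
  simp only [mul_sub, sum_sub_distrib] at hq ⊢
  linarith

namespace IsDeficitQueue

variable {e a : ℕ → ℝ} {t₀ ρ : ℕ}

theorem add_le_succ (hq : IsDeficitQueue e a t₀ ρ) {t : ℕ} (ht : t ∈ Ico t₀ (t₀ + ρ)) :
    e t + a t ≤ e (t + 1) :=
  (hq t ht).ge.trans' (le_max_left _ _)

theorem nonneg (hq : IsDeficitQueue e a t₀ ρ) (h₀ : 0 ≤ e t₀) {t : ℕ}
    (ht : t ∈ Icc t₀ (t₀ + ρ)) : 0 ≤ e t := by
  obtain rfl | hlt := (mem_Icc.mp ht).1.eq_or_lt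
  · exact h₀
  obtain ⟨s, rfl⟩ : ∃ s, t = s + 1 := ⟨t - 1, by omega⟩
  rw [hq s (by simp only [mem_Icc, mem_Ico] at ht ⊢; omega)]
  exact le_max_right _ _

theorem sum_le_sub (hq : IsDeficitQueue e a t₀ ρ) :
    ∑ t ∈ Ico t₀ (t₀ + ρ), a t ≤ e (t₀ + ρ) - e t₀ := by
  rw [← sum_Ico_sub e (Nat.le_add_right t₀ ρ)]
  exact sum_le_sum fun t ht => by linarith [hq.add_le_succ ht]

theorem le_add_mul (hq : IsDeficitQueue e a t₀ ρ) (h₀ : 0 ≤ e t₀) {E : ℝ} (hE : 0 ≤ E)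
    (ha : ∀ t, a t ≤ E) {t : ℕ} (ht : t ∈ Icc t₀ (t₀ + ρ)) :
    e t ≤ e t₀ + (t - t₀ : ℕ) * E := by
  have hstep : ∀ s ∈ Ico t₀ t, e (s + 1) - e s ≤ E := fun s hs => by
    have hs' : s ∈ Ico t₀ (t₀ + ρ) := by simp only [mem_Icc, mem_Ico] at ht hs ⊢; omega
    have := hq.nonneg h₀ (Ico_subset_Icc_self hs')
    rw [hq s hs']
    exact sub_le_iff_le_add'.mpr (max_le (by linarith [ha s]) (by linarith))
  have := (sum_Ico_sub e (mem_Icc.mp ht).1).symm.trans_le (sum_le_sum hstep)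
  rw [sum_const, Nat.card_Ico, nsmul_eq_mul] at this
  linarith

theorem sq_succ_le (hq : IsDeficitQueue e a t₀ ρ) {E : ℝ} {t : ℕ} (ha : |a t| ≤ E)
    (ht : t ∈ Ico t₀ (t₀ + ρ)) : e (t + 1) ^ 2 ≤ e t ^ 2 + 2 * (e t * a t) + E ^ 2 := by
  rw [hq t ht]
  exact max_add_zero_sq_le ha

end IsDeficitQueue

section Lyapunov

variable {ι : Type*} [Fintype ι] {e p q : ι → ℕ → ℝ} {P : ι → ℝ} {G G' : ℕ → ℝ} {V E : ℝ}
  {t₀ ρ : ℕ}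

theorem sum_sq_succ_sub_le (hq : ∀ j, IsDeficitQueue (e j) (fun t => p j t - P j) t₀ ρ)
    (h₀ : ∀ j, 0 ≤ e j t₀) (hE : 0 ≤ E) (hp : ∀ j t, |p j t - P j| ≤ E)
    (hqE : ∀ j t, q j t - P j ≤ E) (hG : ∀ t, 0 ≤ V * G t)
    (hdpp : ∀ t ∈ Ico t₀ (t₀ + ρ),
      V * G t + ∑ j, e j t * p j t ≤ V * G' t + ∑ j, e j t * q j t)
    {t : ℕ} (ht : t ∈ Ico t₀ (t₀ + ρ)) :
    ∑ j, e j (t + 1) ^ 2 - ∑ j, e j t ^ 2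
      ≤ Fintype.card ι * E ^ 2 + 2 * (V * G' t + E * ∑ j, (e j t₀ + (t - t₀ : ℕ) * E)) := by
  have hsq : ∑ j, e j (t + 1) ^ 2 ≤ ∑ j, (e j t ^ 2 + 2 * (e j t * (p j t - P j)) + E ^ 2) :=
    sum_le_sum fun j _ => (hq j).sq_succ_le (hp j t) ht
  have hcross := sum_mul_sub_le_of_drift_plus_penalty (hdpp t ht) (hG t)
    (fun j => (hq j).nonneg (h₀ j) (Ico_subset_Icc_self ht)) (fun j => hqE j t)
  have hgrowth : ∑ j, e j t ≤ ∑ j, (e j t₀ + (t - t₀ : ℕ) * E) :=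
    sum_le_sum fun j _ => (hq j).le_add_mul (h₀ j) hE (fun s => (le_abs_self _).trans (hp j s))
      (Ico_subset_Icc_self ht)
  rw [sum_add_distrib, sum_add_distrib, ← mul_sum, sum_const, card_univ, nsmul_eq_mul] at hsq
  nlinarith [mul_le_mul_of_nonneg_left hgrowth hE]

theorem sum_sq_le (hq : ∀ j, IsDeficitQueue (e j) (fun t => p j t - P j) t₀ ρ)
    (h₀ : ∀ j, 0 ≤ e j t₀) (hE : 0 ≤ E) (hp : ∀ j t, |p j t - P j| ≤ E)
    (hqE : ∀ j t, q j t - P j ≤ E) (hG : ∀ t, 0 ≤ V * G t)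
    (hdpp : ∀ t ∈ Ico t₀ (t₀ + ρ),
      V * G t + ∑ j, e j t * p j t ≤ V * G' t + ∑ j, e j t * q j t) :
    ∑ j, e j (t₀ + ρ) ^ 2 ≤ ∑ j, e j t₀ ^ 2 + ∑ t ∈ Ico t₀ (t₀ + ρ),
      (Fintype.card ι * E ^ 2 + 2 * (V * G' t + E * ∑ j, (e j t₀ + (t - t₀ : ℕ) * E))) := by
  have := (sum_Ico_sub (fun t => ∑ j, e j t ^ 2) (Nat.le_add_right t₀ ρ)).symm.trans_le
    (sum_le_sum fun t ht => sum_sq_succ_sub_le hq h₀ hE hp hqE hG hdpp ht)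
  linarith

end Lyapunov

theorem stmt6_general (K ρ t₀ : ℕ)
    (Emax V : ℝ) (hV : 0 < V)
    (e : Fin K → ℕ → ℝ) (pdag pstar : Fin K → ℕ → ℝ) (Pbar : Fin K → ℝ)
    (Gdag Gstar : ℕ → ℝ)
    (he0 : ∀ k, 0 ≤ e k t₀)
    (hGdag : ∀ t, 0 ≤ Gdag t)
    (hqueue : ∀ (k : Fin K), ∀ t ∈ Finset.Ico t₀ (t₀ + ρ),
      e k (t + 1) = max (e k t + (pdag k t - Pbar k)) 0)
    (hbdd : ∀ (k : Fin K) (t : ℕ),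
      |pdag k t - Pbar k| ≤ Emax ∧ |pstar k t - Pbar k| ≤ Emax)
    (hdpp : ∀ t ∈ Finset.Ico t₀ (t₀ + ρ),
      V * Gdag t + ∑ k, e k t * pdag k t ≤ V * Gstar t + ∑ k, e k t * pstar k t)
    (Ce C : ℝ)
    (hCe : Ce = (1 / 2) * K * Emax ^ 2)
    (hC : C = ρ * Ce + (1 / 2) * ∑ k, (e k t₀) ^ 2
        + Emax * ∑ t ∈ Finset.Ico t₀ (t₀ + ρ), ∑ k, (e k t₀ + ((t - t₀ : ℕ) : ℝ) * Emax)) :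
    ∀ k : Fin K, ∑ t ∈ Finset.Ico t₀ (t₀ + ρ), (pdag k t - Pbar k)
      ≤ Real.sqrt (2 * (C + V * ∑ t ∈ Finset.Ico t₀ (t₀ + ρ), Gstar t)) - e k t₀ := by
  intro k
  have hE : 0 ≤ Emax := (abs_nonneg _).trans (hbdd k t₀).1
  have hlyap := sum_sq_le (p := pdag) (q := pstar) hqueue he0 hE (fun j t => (hbdd j t).1)
    (fun j t => (le_abs_self _).trans (hbdd j t).2) (fun t => mul_nonneg hV.le (hGdag t)) hdpp
  have hbudget : ∑ t ∈ Ico t₀ (t₀ + ρ), (Fintype.card (Fin K) * Emax ^ 2 + 2 * (V * Gstar t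
      + Emax * ∑ j, (e j t₀ + (t - t₀ : ℕ) * Emax)))
      = 2 * (C + V * ∑ t ∈ Ico t₀ (t₀ + ρ), Gstar t) - ∑ j, e j t₀ ^ 2 := by
    simp only [hC, hCe, sum_add_distrib, ← mul_sum, sum_const, Nat.card_Ico, Fintype.card_fin,
      nsmul_eq_mul, Nat.add_sub_cancel_left]
    ring
  have hk : e k (t₀ + ρ) ≤ √(2 * (C + V * ∑ t ∈ Ico t₀ (t₀ + ρ), Gstar t)) :=
    (le_abs_self _).trans <| Real.abs_le_sqrt <|
      (single_le_sum (fun j _ => sq_nonneg (e j (t₀ + ρ))) (mem_univ k)).trans (by linarith)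
  linarith [IsDeficitQueue.sum_le_sub (hqueue k)]

/-- Energy-backlog part of Theorem 2 of the paper (O(√V) bound, eq. (36)),
stated for one period of `ρ` rounds starting at round `t₀`: under the virtual
energy-deficit queue dynamics, bounded power deviations, and per-round
drift-plus-penalty minimization, the cumulative energy overshoot of every
device is `O(√V)`-bounded. -/
theorem stmt6 (K ρ t₀ : ℕ) (hK : 1 ≤ K) (hρ : 1 ≤ ρ)
    (Emax V : ℝ) (hV : 0 < V)
    (e : Fin K → ℕ → ℝ) (pdag pstar : Fin K → ℕ → ℝ) (Pbar : Fin K → ℝ)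
    (Gdag Gstar : ℕ → ℝ)
    (he0 : ∀ k, 0 ≤ e k t₀)
    (hPbar : ∀ k, 0 < Pbar k)
    (hpdag : ∀ k t, 0 ≤ pdag k t) (hpstar : ∀ k t, 0 ≤ pstar k t)
    (hGdag : ∀ t, 0 ≤ Gdag t) (hGstar : ∀ t, 0 ≤ Gstar t)
    (hqueue : ∀ (k : Fin K), ∀ t ∈ Finset.Ico t₀ (t₀ + ρ),
      e k (t + 1) = max (e k t + (pdag k t - Pbar k)) 0)
    (hbdd : ∀ (k : Fin K) (t : ℕ),
      |pdag k t - Pbar k| ≤ Emax ∧ |pstar k t - Pbar k| ≤ Emax)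
    (hdpp : ∀ t ∈ Finset.Ico t₀ (t₀ + ρ),
      V * Gdag t + ∑ k, e k t * pdag k t ≤ V * Gstar t + ∑ k, e k t * pstar k t)
    (Ce C : ℝ)
    (hCe : Ce = (1 / 2) * K * Emax ^ 2)
    (hC : C = ρ * Ce + (1 / 2) * ∑ k, (e k t₀) ^ 2
        + Emax * ∑ t ∈ Finset.Ico t₀ (t₀ + ρ), ∑ k, (e k t₀ + ((t - t₀ : ℕ) : ℝ) * Emax)) :
    ∀ k : Fin K, ∑ t ∈ Finset.Ico t₀ (t₀ + ρ), (pdag k t - Pbar k)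
      ≤ Real.sqrt (2 * (C + V * ∑ t ∈ Finset.Ico t₀ (t₀ + ρ), Gstar t)) - e k t₀ :=
  stmt6_general K ρ t₀ Emax V hV e pdag pstar Pbar Gdag Gstar he0 hGdag hqueue hbdd hdpp Ce C hCe hC
end

section
/- Let K be a nonempty finite index set, S ⊆ K a nonempty subset, D_k > 0 real weights for k ∈ K, and g_k ∈ ℝ^d vectors with ‖g_k‖² ≤ γ for all k ∈ K, where γ > 0. Let D = Σ_{k∈K} D_k and D_S = Σ_{i∈S} D_i, and define the device-selection gradient residual ε_d = ( Σ_{i∈S} D_i g_i ) / D_S − ( Σ_{k∈K} D_k g_k ) / D. Then ‖ε_d‖ ≤ 2·√γ·(D − D_S)/D, and hence ‖ε_d‖² ≤ 4·γ·(D − D_S)² / D². -/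
/-!
Split the full sum over `K` into the part over `S` and the part over `K \ S`, with weights
`D_S` and `D - D_S`. Then the residual is `(D - D_S)/D` times the `S`-average minus `1/D` times
the `K \ S` sum, and each of these two terms has norm at most `√γ (D - D_S)/D`, because a
weighted sum of vectors of norm at most `√γ` has norm at most `√γ` times the total weight.
-/

open Finset

section WeightedSum

variable {ι E : Type*} [SeminormedAddCommGroup E] [NormedSpace ℝ E]

theorem norm_sum_smul_le_sum_mul (T : Finset ι) {w : ι → ℝ} (hw : ∀ i ∈ T, 0 ≤ w i)
    {g : ι → E} {M : ℝ} (hg : ∀ i ∈ T, ‖g i‖ ≤ M) :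
    ‖∑ i ∈ T, w i • g i‖ ≤ (∑ i ∈ T, w i) * M := by
  rw [sum_mul]
  refine norm_sum_le_of_le T fun i hi => ?_
  rw [norm_smul_of_nonneg (hw i hi)]
  exact mul_le_mul_of_nonneg_left (hg i hi) (hw i hi)

theorem norm_inv_smul_sum_smul_le {T : Finset ι} {w : ι → ℝ} (hw : ∀ i ∈ T, 0 ≤ w i)
    (hpos : 0 < ∑ i ∈ T, w i) {g : ι → E} {M : ℝ} (hg : ∀ i ∈ T, ‖g i‖ ≤ M) :
    ‖(∑ i ∈ T, w i)⁻¹ • ∑ i ∈ T, w i • g i‖ ≤ M := by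
  rw [norm_smul_of_nonneg (inv_nonneg.2 hpos.le), inv_mul_le_iff₀ hpos]
  exact norm_sum_smul_le_sum_mul T hw hg

theorem norm_sub_weighted_avg_of_subset_le {K S : Finset ι} (hS : S ⊆ K)
    {w : ι → ℝ} (hw : ∀ k ∈ K, 0 ≤ w k) (hSpos : 0 < ∑ i ∈ S, w i)
    {g : ι → E} {M : ℝ} (hg : ∀ k ∈ K, ‖g k‖ ≤ M) :
    ‖(∑ i ∈ S, w i)⁻¹ • ∑ i ∈ S, w i • g i - (∑ k ∈ K, w k)⁻¹ • ∑ k ∈ K, w k • g k‖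
      ≤ 2 * M * (∑ k ∈ K, w k - ∑ i ∈ S, w i) / ∑ k ∈ K, w k := by
  classical
  set a := ∑ i ∈ S, w i
  set b := ∑ k ∈ K, w k
  set A := ∑ i ∈ S, w i • g i
  set B := ∑ k ∈ K \ S, w k • g k
  have hsplit_w : ∑ k ∈ K \ S, w k = b - a := eq_sub_of_add_eq (sum_sdiff hS)
  have hsplit_g : ∑ k ∈ K, w k • g k = B + A := (sum_sdiff hS).symm
  have hab : a ≤ b := sum_le_sum_of_subset_of_nonneg hS fun i hi _ => hw i hi
  have hb : 0 < b := hSpos.trans_le hab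
  have hidentity : a⁻¹ • A - b⁻¹ • (B + A) = ((b - a) / b) • (a⁻¹ • A) - b⁻¹ • B := by
    have hcoeff : (b - a) / b * a⁻¹ = a⁻¹ - b⁻¹ := by field_simp
    rw [smul_smul, hcoeff, sub_smul, smul_add]
    abel
  have hA : ‖a⁻¹ • A‖ ≤ M := norm_inv_smul_sum_smul_le (fun i hi => hw i (hS hi)) hSpos
    fun i hi => hg i (hS hi)
  have hB : ‖B‖ ≤ (b - a) * M := hsplit_w ▸ norm_sum_smul_le_sum_mul (K \ S)
    (fun k hk => hw k (sdiff_subset hk)) fun k hk => hg k (sdiff_subset hk)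
  rw [hsplit_g, hidentity]
  calc ‖((b - a) / b) • (a⁻¹ • A) - b⁻¹ • B‖
      ≤ (b - a) / b * ‖a⁻¹ • A‖ + b⁻¹ * ‖B‖ := by
        refine (norm_sub_le _ _).trans_eq ?_
        rw [norm_smul_of_nonneg (div_nonneg (sub_nonneg.2 hab) hb.le),
          norm_smul_of_nonneg (inv_nonneg.2 hb.le)]
    _ ≤ (b - a) / b * M + b⁻¹ * ((b - a) * M) := by gcongr
    _ = 2 * M * (b - a) / b := by ring

end WeightedSum

theorem stmt15_general {ι : Type*} {d : ℕ} (K S : Finset ι) (hS : S ⊆ K)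
    (hSne : S.Nonempty)
    (D : ι → ℝ) (hD : ∀ k ∈ K, 0 < D k) (γ : ℝ) (hγ : 0 < γ)
    (g : ι → EuclideanSpace ℝ (Fin d))
    (hg : ∀ k ∈ K, ‖g k‖ ^ 2 ≤ γ)
    (Dtot DS : ℝ) (hDtot : Dtot = ∑ k ∈ K, D k) (hDS : DS = ∑ i ∈ S, D i)
    (εd : EuclideanSpace ℝ (Fin d))
    (hεd : εd = DS⁻¹ • ∑ i ∈ S, D i • g i - Dtot⁻¹ • ∑ k ∈ K, D k • g k) :
    ‖εd‖ ≤ 2 * Real.sqrt γ * (Dtot - DS) / Dtot ∧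
    ‖εd‖ ^ 2 ≤ 4 * γ * (Dtot - DS) ^ 2 / Dtot ^ 2 := by
  have hnorm : ∀ k ∈ K, ‖g k‖ ≤ Real.sqrt γ := fun k hk =>
    abs_norm (g k) ▸ Real.abs_le_sqrt (hg k hk)
  have hDSpos : 0 < DS := hDS ▸ sum_pos (fun i hi => hD i (hS hi)) hSne
  have hbound : ‖εd‖ ≤ 2 * Real.sqrt γ * (Dtot - DS) / Dtot := by
    subst hεd hDtot hDS
    exact norm_sub_weighted_avg_of_subset_le hS (fun k hk => (hD k hk).le) hDSpos hnorm
  refine ⟨hbound, ?_⟩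
  calc ‖εd‖ ^ 2 ≤ (2 * Real.sqrt γ * (Dtot - DS) / Dtot) ^ 2 := by gcongr
    _ = 4 * γ * (Dtot - DS) ^ 2 / Dtot ^ 2 := by
        rw [div_pow, mul_pow, mul_pow, Real.sq_sqrt hγ.le]
        norm_num

/-- Bound on the device-selection gradient residual (Appendix B of the paper):
the difference between the weighted average gradient of the scheduled subset
`S` and the full-population weighted average gradient is bounded by
`2√γ (D − D_S)/D`. -/
theorem stmt15 {ι : Type*} {d : ℕ} (K S : Finset ι) (hS : S ⊆ K)
    (hKne : K.Nonempty) (hSne : S.Nonempty)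
    (D : ι → ℝ) (hD : ∀ k ∈ K, 0 < D k) (γ : ℝ) (hγ : 0 < γ)
    (g : ι → EuclideanSpace ℝ (Fin d))
    (hg : ∀ k ∈ K, ‖g k‖ ^ 2 ≤ γ)
    (Dtot DS : ℝ) (hDtot : Dtot = ∑ k ∈ K, D k) (hDS : DS = ∑ i ∈ S, D i)
    (εd : EuclideanSpace ℝ (Fin d))
    (hεd : εd = DS⁻¹ • ∑ i ∈ S, D i • g i - Dtot⁻¹ • ∑ k ∈ K, D k • g k) :
    ‖εd‖ ≤ 2 * Real.sqrt γ * (Dtot - DS) / Dtot ∧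
    ‖εd‖ ^ 2 ≤ 4 * γ * (Dtot - DS) ^ 2 / Dtot ^ 2 :=
  stmt15_general K S hS hSne D hD γ hγ g hg Dtot DS hDtot hDS εd hεd
end
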